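/- arXiv:2405.08971 — 6 statements merged into one kernel-verified Lean document; each statement's English description precedes it below -/
import Mathlib

section
/- Let x ~ N(μ, Σ) be a Gaussian random vector in R^D, and let A ∈ R^{m×D}, B ∈ R^{n×D}, and β ∈ range(BΣ). Define M(ξ) = A ξ + A Σ Bᵀ (B Σ Bᵀ)⁻¹ (β − B ξ) for ξ ∈ R^D (using the Moore–Penrose pseudoinverse where needed). Then the random vector M(x) has the same distribution as the conditional distribution of A x given B x = β, namely Gaussian with mean A μ + A Σ Bᵀ (B Σ Bᵀ)⁻¹ (β − B μ) and covariance A Σ Aᵀ − A Σ Bᵀ (B Σ Bᵀ)⁻¹ B Σ Aᵀ. -/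
open Matrix MeasureTheory ProbabilityTheory

/-- A random vector is Gaussian with mean `m` and covariance `C` if every linear
functional of it is a real Gaussian with the corresponding moments. -/
def IsGaussianVec {Ω : Type*} [MeasurableSpace Ω] (μP : Measure Ω) {n : Type*} [Fintype n]
    (X : Ω → (n → ℝ)) (m : n → ℝ) (C : Matrix n n ℝ) : Prop :=
  ∀ a : n → ℝ,
    μP.map (fun ω => ∑ i, a i * X ω i) =
      gaussianReal (∑ i, a i * m i) (Real.toNNReal (a ⬝ᵥ (C *ᵥ a)))

/-!
Writing `K = A Σ Bᵀ P` for the gain, the update is the affine map `ξ ↦ (A - K B) ξ + K β`, and an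
affine image of a Gaussian vector is Gaussian with covariance `(A - K B) Σ (A - K B)ᵀ`. This
collapses to `A Σ Aᵀ - K B Σ Aᵀ` thanks to `Σ Bᵀ P (B Σ Bᵀ) = Σ Bᵀ`, which follows from
`(B Σ Bᵀ) P (B Σ Bᵀ) = B Σ Bᵀ` because `ker (B Σ Bᵀ) ⊆ ker (Σ Bᵀ)` for `Σ ⪰ 0`:
`xᵀ B Σ Bᵀ x = 0` forces `Σ Bᵀ x = 0`.
-/
namespace Matrix.PosSemidef

variable {ι κ o : Type*} [Fintype ι] [Fintype κ] {Sg : Matrix ι ι ℝ}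

theorem mul_transpose_mulVec_eq_zero (hSg : Sg.PosSemidef) (B : Matrix κ ι ℝ) {x : κ → ℝ}
    (hx : (B * Sg * Bᵀ) *ᵥ x = 0) : (Sg * Bᵀ) *ᵥ x = 0 := by
  rw [← mulVec_mulVec]
  refine (hSg.dotProduct_mulVec_zero_iff _).mp ?_
  rw [star_trivial, mulVec_transpose, ← dotProduct_mulVec, ← mulVec_transpose, mulVec_mulVec,
    mulVec_mulVec, hx, dotProduct_zero]

theorem mul_transpose_mul_mul_self_eq (hSg : Sg.PosSemidef) (B : Matrix κ ι ℝ)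
    {P : Matrix κ κ ℝ} (hP : B * Sg * Bᵀ * P * (B * Sg * Bᵀ) = B * Sg * Bᵀ) :
    Sg * Bᵀ * P * (B * Sg * Bᵀ) = Sg * Bᵀ := by
  refine ext_iff_mulVec.mpr fun v => sub_eq_zero.mp ?_
  have hker : (B * Sg * Bᵀ) *ᵥ ((P * (B * Sg * Bᵀ)) *ᵥ v - v) = 0 := by
    rw [mulVec_sub, mulVec_mulVec, ← Matrix.mul_assoc, hP, sub_self]
  simpa only [mulVec_sub, mulVec_mulVec, Matrix.mul_assoc] using
    hSg.mul_transpose_mulVec_eq_zero B hker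

theorem sub_gain_mul_mul_sub_gain_transpose (hSg : Sg.PosSemidef) (A : Matrix o ι ℝ)
    (B : Matrix κ ι ℝ) {P : Matrix κ κ ℝ}
    (hP : B * Sg * Bᵀ * P * (B * Sg * Bᵀ) = B * Sg * Bᵀ) :
    (A - A * Sg * Bᵀ * P * B) * Sg * (A - A * Sg * Bᵀ * P * B)ᵀ =
      A * Sg * Aᵀ - A * Sg * Bᵀ * P * B * Sg * Aᵀ := by
  have hSgt : Sgᵀ = Sg := hSg.isHermitian
  have hright := hSg.mul_transpose_mul_mul_self_eq B hP
  have hleft : B * Sg * Bᵀ * Pᵀ * (B * Sg) = B * Sg := by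
    simpa [transpose_mul, hSgt, Matrix.mul_assoc] using congrArg Matrix.transpose hright
  have hquad : A * Sg * Bᵀ * P * (B * Sg * Bᵀ * Pᵀ * (B * Sg)) * Aᵀ =
      A * Sg * Bᵀ * P * B * Sg * Aᵀ := by
    rw [hleft]; simp only [Matrix.mul_assoc]
  have hcross : A * (Sg * Bᵀ) * Pᵀ * (B * Sg) * Aᵀ = A * Sg * Bᵀ * P * B * Sg * Aᵀ := by
    rw [← hright, ← hquad]; simp only [Matrix.mul_assoc]
  simp only [Matrix.mul_assoc] at hquad hcross
  simp only [transpose_sub, transpose_mul, transpose_transpose, hSgt, Matrix.sub_mul,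
    Matrix.mul_sub, Matrix.mul_assoc, hquad, hcross]
  abel

end Matrix.PosSemidef

theorem IsGaussianVec.mulVec_add {Ω : Type*} [MeasurableSpace Ω] {μP : Measure Ω}
    {ι κ : Type*} [Fintype ι] [Fintype κ] {X : Ω → ι → ℝ} {m : ι → ℝ} {C : Matrix ι ι ℝ}
    (hX : IsGaussianVec μP X m C) (K : Matrix κ ι ℝ) (c : κ → ℝ) :
    IsGaussianVec μP (fun ω => K *ᵥ X ω + c) (K *ᵥ m + c) (K * C * Kᵀ) := by
  intro a
  set w := Kᵀ *ᵥ a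
  have hlin : ∀ x, ∑ i, a i * (K *ᵥ x + c) i = ∑ j, w j * x j + a ⬝ᵥ c := fun x => by
    change a ⬝ᵥ (K *ᵥ x + c) = w ⬝ᵥ x + a ⬝ᵥ c
    rw [dotProduct_add, dotProduct_mulVec, ← mulVec_transpose]
  have hvar : a ⬝ᵥ (K * C * Kᵀ) *ᵥ a = w ⬝ᵥ C *ᵥ w := by
    rw [← mulVec_mulVec, ← mulVec_mulVec, dotProduct_mulVec, ← mulVec_transpose]
  -- `Measure.map` of a non-measurable function is `0`, which is not a Gaussian.
  have hmeas : AEMeasurable (fun ω => ∑ j, w j * X ω j) μP := by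
    by_contra h
    exact IsProbabilityMeasure.ne_zero (gaussianReal _ _)
      ((Measure.map_of_not_aemeasurable h).symm.trans (hX w)).symm
  calc μP.map (fun ω => ∑ i, a i * (K *ᵥ X ω + c) i)
      = (μP.map fun ω => ∑ j, w j * X ω j).map (· + a ⬝ᵥ c) := by
        simp only [hlin]
        exact (AEMeasurable.map_map_of_aemeasurable (measurable_add_const _).aemeasurable
          hmeas).symm
    _ = gaussianReal (∑ j, w j * m j + a ⬝ᵥ c) (w ⬝ᵥ C *ᵥ w).toNNReal := by
        rw [hX w, gaussianReal_map_add_const]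
    _ = _ := by rw [← hlin, hvar]

theorem Matrix.mulVec_add_mulVec_sub_mulVec {R ι κ o : Type*} [Ring R] [Fintype ι] [Fintype κ]
    (A : Matrix o ι R) (K : Matrix o κ R) (B : Matrix κ ι R) (β : κ → R) (x : ι → R) :
    A *ᵥ x + K *ᵥ (β - B *ᵥ x) = (A - K * B) *ᵥ x + K *ᵥ β := by
  rw [mulVec_sub, sub_mulVec, ← mulVec_mulVec]
  abel

theorem matheron_rule_general {D m n : ℕ} {Ω : Type*} [MeasurableSpace Ω]
    (μP : Measure Ω)
    (X : Ω → (Fin D → ℝ)) (μ : Fin D → ℝ) (Sg : Matrix (Fin D) (Fin D) ℝ)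
    (hSg : Sg.PosSemidef) (hX : IsGaussianVec μP X μ Sg)
    (A : Matrix (Fin m) (Fin D) ℝ) (B : Matrix (Fin n) (Fin D) ℝ)
    (β : Fin n → ℝ)
    (P : Matrix (Fin n) (Fin n) ℝ)
    (hP1 : (B * Sg * Bᵀ) * P * (B * Sg * Bᵀ) = B * Sg * Bᵀ) :
    IsGaussianVec μP
      (fun ω => A *ᵥ X ω + (A * Sg * Bᵀ * P) *ᵥ (β - B *ᵥ X ω))
      (A *ᵥ μ + (A * Sg * Bᵀ * P) *ᵥ (β - B *ᵥ μ))
      (A * Sg * Aᵀ - A * Sg * Bᵀ * P * B * Sg * Aᵀ) := by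
  simp only [mulVec_add_mulVec_sub_mulVec]
  rw [← hSg.sub_gain_mul_mul_sub_gain_transpose A B hP1]
  exact hX.mulVec_add _ _

/-- Matheron's rule: for `x ~ N(μ, Σ)`, `A`, `B` matrices, `β ∈ range(BΣ)`, and
`P` the Moore–Penrose pseudoinverse of `B Σ Bᵀ` (characterized by the four Penrose
conditions), the random vector `M(x) = A x + A Σ Bᵀ P (β - B x)` is Gaussian with
mean `A μ + A Σ Bᵀ P (β - B μ)` and covariance `A Σ Aᵀ - A Σ Bᵀ P B Σ Aᵀ`,
i.e. it has the same distribution as the conditional distribution of `A x` given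
`B x = β`. -/
theorem matheron_rule {D m n : ℕ} {Ω : Type*} [MeasurableSpace Ω]
    (μP : Measure Ω) [IsProbabilityMeasure μP]
    (X : Ω → (Fin D → ℝ)) (μ : Fin D → ℝ) (Sg : Matrix (Fin D) (Fin D) ℝ)
    (hSg : Sg.PosSemidef) (hX : IsGaussianVec μP X μ Sg)
    (A : Matrix (Fin m) (Fin D) ℝ) (B : Matrix (Fin n) (Fin D) ℝ)
    (β : Fin n → ℝ) (hβ : ∃ ξ, (B * Sg) *ᵥ ξ = β)
    (P : Matrix (Fin n) (Fin n) ℝ)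
    (hP1 : (B * Sg * Bᵀ) * P * (B * Sg * Bᵀ) = B * Sg * Bᵀ)
    (hP2 : P * (B * Sg * Bᵀ) * P = P)
    (hP3 : ((B * Sg * Bᵀ) * P)ᵀ = (B * Sg * Bᵀ) * P)
    (hP4 : (P * (B * Sg * Bᵀ))ᵀ = P * (B * Sg * Bᵀ)) :
    IsGaussianVec μP
      (fun ω => A *ᵥ X ω + (A * Sg * Bᵀ * P) *ᵥ (β - B *ᵥ X ω))
      (A *ᵥ μ + (A * Sg * Bᵀ * P) *ᵥ (β - B *ᵥ μ))
      (A * Sg * Aᵀ - A * Sg * Bᵀ * P * B * Sg * Aᵀ) :=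
  matheron_rule_general μP X μ Sg hSg hX A B β P hP1
end

section
/- In a linear-Gaussian state-space model, suppose the smoother moments at step k+1 satisfy m^s_{k+1} − m⁻_{k+1} = P⁻_{k+1} w^s_{k+1} and P^s_{k+1} − P⁻_{k+1} = − P⁻_{k+1} W^s_{k+1} (P⁻_{k+1} W^s_{k+1})ᵀ for some vector w^s_{k+1} and matrix W^s_{k+1}. Then with smoother gain G^s_k = P_k A_kᵀ (P⁻_{k+1})⁻¹, the RTS recursions m^s_k = m_k + G^s_k (m^s_{k+1} − m⁻_{k+1}) and P^s_k = P_k + G^s_k (P^s_{k+1} − P⁻_{k+1}) (G^s_k)ᵀ simplify to m^s_k = m_k + P_k A_kᵀ w^s_{k+1} and P^s_k = P_k − P_k A_kᵀ W^s_{k+1} (P_k A_kᵀ W^s_{k+1})ᵀ; in particular no inversion of P⁻_{k+1} is needed. -/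
open Matrix

/-- Inverse-free RTS smoother step: if the smoother moments at step `k+1` admit the
representation `m^s_{k+1} - m⁻_{k+1} = P⁻_{k+1} w` and
`P^s_{k+1} - P⁻_{k+1} = -(P⁻_{k+1} W)(P⁻_{k+1} W)ᵀ`, then the RTS recursions with
smoother gain `G^s = P_k A_kᵀ (P⁻_{k+1})⁻¹` simplify to
`m^s_k = m_k + P_k A_kᵀ w` and `P^s_k = P_k - (P_k Aᵀ W)(P_k Aᵀ W)ᵀ`. -/
theorem rts_inverse_free_step {D p : ℕ}
    (Pk Pm Ps1 A Gs Psk : Matrix (Fin D) (Fin D) ℝ)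
    (W : Matrix (Fin D) (Fin p) ℝ)
    (mk mMinus ms1 msk : Fin D → ℝ) (w : Fin D → ℝ)
    (hPmSym : Pmᵀ = Pm) (hPmInv : IsUnit Pm.det)
    (hmRep : ms1 - mMinus = Pm *ᵥ w)
    (hPRep : Ps1 - Pm = -((Pm * W) * (Pm * W)ᵀ))
    (hGs : Gs = Pk * Aᵀ * Pm⁻¹)
    (hmsk : msk = mk + Gs *ᵥ (ms1 - mMinus))
    (hPsk : Psk = Pk + Gs * (Ps1 - Pm) * Gsᵀ) :
    msk = mk + (Pk * Aᵀ) *ᵥ w ∧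
    Psk = Pk - (Pk * Aᵀ * W) * (Pk * Aᵀ * W)ᵀ := by
  have hGsPm : Gs * Pm = Pk * Aᵀ := by
    rw [hGs, Matrix.mul_assoc, Matrix.nonsing_inv_mul Pm hPmInv, Matrix.mul_one]
  constructor
  · rw [hmsk, hmRep, Matrix.mulVec_mulVec, hGsPm]
  · rw [hPsk, hPRep]
    have : Gs * -(Pm * W * (Pm * W)ᵀ) * Gsᵀ
        = -((Pk * Aᵀ * W) * (Pk * Aᵀ * W)ᵀ) := by
      have h2 : (Pm * W)ᵀ * Gsᵀ = (Gs * (Pm * W))ᵀ := by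
        simp [Matrix.transpose_mul, hPmSym, Matrix.mul_assoc]
      calc Gs * -(Pm * W * (Pm * W)ᵀ) * Gsᵀ
          = -(Gs * (Pm * W) * ((Pm * W)ᵀ * Gsᵀ)) := by
            simp [Matrix.mul_assoc]
        _ = -((Pk * Aᵀ * W) * (Pk * Aᵀ * W)ᵀ) := by
            rw [h2, ← Matrix.mul_assoc, hGsPm]
    rw [this]; exact (sub_eq_add_neg _ _).symm
end

section
/- Under the hypotheses of the inverse-free RTS smoother and with the filter identities m_k = m⁻_k + K_k r_k, P_k = P⁻_k − K_k G_k K_kᵀ, K_k = P⁻_k H_kᵀ G_k⁻¹, r_k = y_k − H_k m⁻_k, the smoothed mean satisfies m^s_k = m⁻_k + P⁻_k w^s_k where w^s_k = H_kᵀ G_k⁻¹ r_k + (I − H_kᵀ G_k⁻¹ H_k P⁻_k) A_kᵀ w^s_{k+1}. That is, the smoother mean admits the same prior-plus-P⁻w representation at step k, with w^s_k given by the stated backward recursion. -/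
open Matrix

/-- Backward recursion for the smoother representation: with the filter identities
`m_k = m⁻_k + K_k r_k`, `P_k = P⁻_k - K_k G_k K_kᵀ`, `K_k = P⁻_k H_kᵀ G_k⁻¹`,
`r_k = y_k - H_k m⁻_k`, and `m^s_k = m_k + P_k A_kᵀ w^s_{k+1}`, the smoothed mean
satisfies `m^s_k = m⁻_k + P⁻_k w^s_k` where
`w^s_k = Hᵀ G⁻¹ r + (I - Hᵀ G⁻¹ H P⁻) Aᵀ w^s_{k+1}`. -/
theorem rts_smoother_mean_recursion {D N : ℕ}
    (Pm Pk A : Matrix (Fin D) (Fin D) ℝ) (H : Matrix (Fin N) (Fin D) ℝ)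
    (Λ G : Matrix (Fin N) (Fin N) ℝ) (K : Matrix (Fin D) (Fin N) ℝ)
    (y r : Fin N → ℝ) (mMinus mk msk wk w1 : Fin D → ℝ)
    (hPmSym : Pmᵀ = Pm) (hΛSym : Λᵀ = Λ)
    (hG : G = H * Pm * Hᵀ + Λ) (hGU : IsUnit G.det)
    (hK : K = Pm * Hᵀ * G⁻¹)
    (hr : r = y - H *ᵥ mMinus)
    (hm : mk = mMinus + K *ᵥ r)
    (hP : Pk = Pm - K * G * Kᵀ)
    (hmsk : msk = mk + (Pk * Aᵀ) *ᵥ w1)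
    (hwk : wk = (Hᵀ * G⁻¹) *ᵥ r + ((1 - Hᵀ * G⁻¹ * H * Pm) * Aᵀ) *ᵥ w1) :
    msk = mMinus + Pm *ᵥ wk := by
  have hGsym : Gᵀ = G := by
    rw [hG]; simp [Matrix.transpose_add, Matrix.transpose_mul, hPmSym, hΛSym, Matrix.mul_assoc]
  have hGinv : Gᵀ⁻¹ = G⁻¹ := by rw [hGsym]
  have hKGK : K * G * Kᵀ = Pm * Hᵀ * G⁻¹ * (H * Pm) := by
    rw [hK]
    rw [Matrix.transpose_mul, Matrix.transpose_mul, Matrix.transpose_nonsing_inv, hGinv,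
      Matrix.transpose_transpose, hPmSym]
    have : G⁻¹ * G * G⁻¹ = G⁻¹ := by
      rw [Matrix.nonsing_inv_mul G hGU, Matrix.one_mul]
    calc Pm * Hᵀ * G⁻¹ * G * (G⁻¹ * (H * Pm))
        = Pm * Hᵀ * (G⁻¹ * G * G⁻¹) * (H * Pm) := by
          simp only [Matrix.mul_assoc]
      _ = Pm * Hᵀ * G⁻¹ * (H * Pm) := by rw [this]
  subst hmsk hwk hm hP hK
  rw [Matrix.mulVec_add, hKGK]
  simp only [Matrix.sub_mul, Matrix.mul_sub, Matrix.one_mul, Matrix.sub_mulVec,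
    Matrix.mulVec_add, Matrix.mulVec_sub, Matrix.mulVec_mulVec, Matrix.mul_assoc]
  abel
end

section
/- With the Ĝ-orthonormalization iteration above and actions S = (s⁽¹⁾ … s⁽ᵏ⁾) having linearly independent columns, the matrix V = (z⁽¹⁾ … z⁽ᵏ⁾) satisfies V Vᵀ = S (Sᵀ Ĝ S)⁻¹ Sᵀ. That is, the incremental orthogonalized update computes the same projected inverse as batch conditioning on Sᵀ of the data. -/
/-! The vectors `z i` are the `G`-Gram–Schmidt orthonormalization of the `s i`: inductively,
`d i` is `G`-orthogonal to the earlier `z j`, it is nonzero because `s i` is not in the span of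
the earlier `s j`, and `sᵢᵀ G dᵢ = dᵢᵀ G dᵢ > 0`, so `z i` is `G`-normalized. Hence `V = S C` for
a square matrix `C` with `Vᵀ G V = 1`, i.e. `Cᵀ (Sᵀ G S) C = 1`. For square matrices this forces
`(Sᵀ G S)⁻¹ = C Cᵀ`, so `S (Sᵀ G S)⁻¹ Sᵀ = S C Cᵀ Sᵀ = V Vᵀ`. -/

open Matrix

section MatrixFacts

variable {m n ι R : Type*} [CommRing R]

theorem Matrix.IsSymm.dotProduct_mulVec_comm [Fintype n] {G : Matrix n n R} (hG : G.IsSymm)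
    (x y : n → R) : x ⬝ᵥ (G *ᵥ y) = y ⬝ᵥ (G *ᵥ x) := by
  rw [dotProduct_mulVec, ← mulVec_transpose, hG.eq, dotProduct_comm]

theorem Matrix.transpose_mul_mul_apply [Fintype n] (A : Matrix n m R) (G : Matrix n n R)
    (i j : m) : (Aᵀ * G * A) i j = A.col i ⬝ᵥ (G *ᵥ A.col j) := by
  rw [Matrix.mul_assoc, mul_apply_eq_vecMul, ← vecMul_vecMul]
  exact (dotProduct_mulVec _ _ _).symm

theorem Matrix.mul_transpose_eq_sum_vecMulVec [Fintype ι] (A : Matrix n ι R) :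
    A * Aᵀ = ∑ i, vecMulVec (A.col i) (A.col i) := by
  ext a b
  simp [mul_apply, Matrix.sum_apply, vecMulVec_apply]

theorem Matrix.exists_eq_mul_of_col_mem_span [Fintype ι] {S : Matrix n ι R} {Z : Matrix n m R}
    (h : ∀ i, Z.col i ∈ Submodule.span R (Set.range S.col)) : ∃ C : Matrix ι m R, Z = S * C := by
  simp_rw [← range_mulVecLin, LinearMap.mem_range, mulVecLin_apply] at h
  choose c hc using h
  exact ⟨(of c)ᵀ, ext_col fun i => (hc i).symm⟩

theorem Matrix.inv_eq_mul_transpose_of_transpose_mul_mul_eq_one [Fintype ι] [DecidableEq ι]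
    {M C : Matrix ι ι R} (h : Cᵀ * M * C = 1) : M⁻¹ = C * Cᵀ := by
  refine inv_eq_left_inv ?_
  rw [Matrix.mul_assoc, mul_eq_one_comm.mp h]

theorem Matrix.mul_inv_transpose_eq_mul_transpose [Fintype n] [Fintype ι] [DecidableEq ι]
    {S Z : Matrix n ι R} {C : Matrix ι ι R} (G : Matrix n n R) (hZ : Z = S * C)
    (hG : Zᵀ * G * Z = 1) : S * (Sᵀ * G * S)⁻¹ * Sᵀ = Z * Zᵀ := by
  have : Cᵀ * (Sᵀ * G * S) * C = 1 := by
    rw [← hG, hZ, transpose_mul]; simp only [Matrix.mul_assoc]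
  rw [inv_eq_mul_transpose_of_transpose_mul_mul_eq_one this, hZ, transpose_mul]
  simp only [Matrix.mul_assoc]

end MatrixFacts

section GramSchmidt

open Finset Submodule

variable {n ι : Type*} [Fintype n]

theorem dotProduct_mulVec_sub_sum_smul_eq_zero {R : Type*} [CommRing R] [DecidableEq ι]
    {G : Matrix n n R} {e : ι → n → R} {t : Finset ι}
    (he : ∀ j ∈ t, ∀ l ∈ t, e j ⬝ᵥ (G *ᵥ e l) = if j = l then 1 else 0) (x : n → R) {l : ι}
    (hl : l ∈ t) : e l ⬝ᵥ (G *ᵥ (x - ∑ j ∈ t, (e j ⬝ᵥ (G *ᵥ x)) • e j)) = 0 := by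
  rw [mulVec_sub, dotProduct_sub, mulVec_sum, dotProduct_sum, sum_eq_single_of_mem l hl,
    mulVec_smul, dotProduct_smul, he l hl l hl, if_pos rfl, smul_eq_mul, mul_one, sub_self]
  intro j hj hjl
  rw [mulVec_smul, dotProduct_smul, he l hl j hj, if_neg (Ne.symm hjl), smul_zero]

theorem dotProduct_mulVec_eq_self_of_orthogonal {R : Type*} [CommRing R] {G : Matrix n n R}
    {e : ι → n → R} {t : Finset ι} {c : ι → R} {x d : n → R} (hd : d = x - ∑ j ∈ t, c j • e j)
    (horth : ∀ j ∈ t, e j ⬝ᵥ (G *ᵥ d) = 0) : x ⬝ᵥ (G *ᵥ d) = d ⬝ᵥ (G *ᵥ d) := by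
  rw [← eq_sub_iff_add_eq.mp hd, add_dotProduct, sum_dotProduct,
    sum_eq_zero fun j hj => by rw [smul_dotProduct, horth j hj, smul_zero], add_zero]

theorem gramSchmidt_step_orthonormal [DecidableEq ι] {G : Matrix n n ℝ} (hG : G.PosDef)
    {e : ι → n → ℝ} {t : Finset ι}
    (he : ∀ j ∈ t, ∀ l ∈ t, e j ⬝ᵥ (G *ᵥ e l) = if j = l then 1 else 0)
    {x d z : n → ℝ} (hx : x ∉ span ℝ (e '' t))
    (hd : d = x - ∑ j ∈ t, (e j ⬝ᵥ (G *ᵥ x)) • e j) (hz : z = (√(x ⬝ᵥ (G *ᵥ d)))⁻¹ • d) :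
    (∀ j ∈ t, e j ⬝ᵥ (G *ᵥ z) = 0) ∧ z ⬝ᵥ (G *ᵥ z) = 1 := by
  have horth : ∀ j ∈ t, e j ⬝ᵥ (G *ᵥ d) = 0 := fun j hj =>
    hd ▸ dotProduct_mulVec_sub_sum_smul_eq_zero he x hj
  have hd0 : d ≠ 0 := by
    rintro rfl
    refine hx (sub_eq_zero.mp hd.symm ▸ sum_mem fun j hj => smul_mem _ _ ?_)
    exact subset_span ⟨j, hj, rfl⟩
  have hxd : x ⬝ᵥ (G *ᵥ d) = d ⬝ᵥ (G *ᵥ d) := dotProduct_mulVec_eq_self_of_orthogonal hd horth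
  have hpos : 0 < x ⬝ᵥ (G *ᵥ d) := by simpa [hxd] using hG.dotProduct_mulVec_pos hd0
  subst hz
  refine ⟨fun j hj => by rw [mulVec_smul, dotProduct_smul, horth j hj, smul_zero], ?_⟩
  rw [mulVec_smul, dotProduct_smul, smul_dotProduct, ← hxd, smul_smul, smul_eq_mul, ← sq,
    inv_pow, Real.sq_sqrt hpos.le, inv_mul_cancel₀ hpos.ne']

variable [Fintype ι] [LinearOrder ι] {G : Matrix n n ℝ} {s d z : ι → n → ℝ}

theorem gramSchmidt_mem_span_and_orthonormal (hG : G.PosDef) (hs : LinearIndependent ℝ s)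
    (hd : ∀ i, d i = s i - ∑ j ∈ univ.filter (fun j => j < i), ((z j) ⬝ᵥ (G *ᵥ s i)) • z j)
    (hz : ∀ i, z i = (√((s i) ⬝ᵥ (G *ᵥ d i)))⁻¹ • d i) (i : ι) :
    z i ∈ span ℝ (s '' Set.Iic i) ∧ z i ⬝ᵥ (G *ᵥ z i) = 1 ∧
      ∀ j < i, z j ⬝ᵥ (G *ᵥ z i) = 0 := by
  induction i using WellFoundedLT.induction with
  | _ i ih =>
  set t := univ.filter (fun j => j < i)
  have mem_t : ∀ {j}, j ∈ t ↔ j < i := by simp [t]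
  have he : ∀ j ∈ t, ∀ l ∈ t, z j ⬝ᵥ (G *ᵥ z l) = if j = l then 1 else 0 := by
    intro j hj l hl
    rw [mem_t] at hj hl
    rcases lt_trichotomy j l with h | rfl | h
    · rw [if_neg h.ne, (ih l hl).2.2 j h]
    · rw [if_pos rfl, (ih j hj).2.1]
    · rw [if_neg h.ne', (isHermitian_iff_isSymm.mp hG.1).dotProduct_mulVec_comm,
        (ih j hj).2.2 l h]
  have hspan : span ℝ (z '' t) ≤ span ℝ (s '' Set.Iio i) := by
    refine span_le.mpr ?_
    rintro _ ⟨j, hj, rfl⟩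
    rw [mem_coe, mem_t] at hj
    exact span_mono (Set.image_mono (Set.Iic_subset_Iio.mpr hj)) (ih j hj).1
  have hx : s i ∉ span ℝ (z '' t) := fun h => hs.notMem_span_image (by simp) (hspan h)
  obtain ⟨horth, hnorm⟩ := gramSchmidt_step_orthonormal hG he hx (hd i) (hz i)
  refine ⟨?_, hnorm, fun j hj => horth j (mem_t.mpr hj)⟩
  rw [hz i, hd i]
  refine smul_mem _ _ (sub_mem (subset_span ⟨i, le_rfl, rfl⟩) ?_)
  refine span_mono (Set.image_mono Set.Iio_subset_Iic_self) (hspan ?_)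
  exact sum_mem fun j hj => smul_mem _ _ (subset_span ⟨j, hj, rfl⟩)

theorem gramSchmidt_transpose_mul_mul_eq_one (hG : G.PosDef) (hs : LinearIndependent ℝ s)
    (hd : ∀ i, d i = s i - ∑ j ∈ univ.filter (fun j => j < i), ((z j) ⬝ᵥ (G *ᵥ s i)) • z j)
    (hz : ∀ i, z i = (√((s i) ⬝ᵥ (G *ᵥ d i)))⁻¹ • d i) :
    (of fun a i => z i a)ᵀ * G * (of fun a i => z i a) = 1 := by
  ext i j
  rw [transpose_mul_mul_apply, one_apply]
  obtain ⟨-, hnorm, horth⟩ := gramSchmidt_mem_span_and_orthonormal hG hs hd hz j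
  rcases lt_trichotomy i j with h | rfl | h
  · exact (horth i h).trans (if_neg h.ne).symm
  · exact hnorm.trans (if_pos rfl).symm
  · rw [if_neg h.ne', (isHermitian_iff_isSymm.mp hG.1).dotProduct_mulVec_comm]
    exact (gramSchmidt_mem_span_and_orthonormal hG hs hd hz i).2.2 j h

end GramSchmidt

/-- The iterative `Ĝ`-orthogonalized update computes the same projected inverse
as batch conditioning: `V Vᵀ = S (Sᵀ Ĝ S)⁻¹ Sᵀ` where the columns of `V` are the
orthogonalized vectors `z⁽ⁱ⁾` and the columns of `S` are the actions `s⁽ⁱ⁾`. -/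
theorem gram_schmidt_batch_equiv {N k : ℕ}
    (G : Matrix (Fin N) (Fin N) ℝ) (hG : G.PosDef)
    (s d z : Fin k → (Fin N → ℝ))
    (hs : LinearIndependent ℝ s)
    (hd : ∀ i, d i = s i - ∑ j ∈ Finset.univ.filter (fun j => j < i),
      ((z j) ⬝ᵥ (G *ᵥ s i)) • z j)
    (hz : ∀ i, z i = (Real.sqrt ((s i) ⬝ᵥ (G *ᵥ d i)))⁻¹ • d i) :
    (∑ i, Matrix.vecMulVec (z i) (z i)) =
      (Matrix.of fun a i => s i a) *
        ((Matrix.of fun a i => s i a)ᵀ * G * (Matrix.of fun a i => s i a))⁻¹ *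
        (Matrix.of fun a i => s i a)ᵀ := by
  obtain ⟨C, hC⟩ := exists_eq_mul_of_col_mem_span (S := of fun a i => s i a)
    (Z := of fun a i => z i a) fun i => Submodule.span_mono (Set.image_subset_range _ _)
      (gramSchmidt_mem_span_and_orthonormal hG hs hd hz i).1
  rw [mul_inv_transpose_eq_mul_transpose G hC
    (gramSchmidt_transpose_mul_mul_eq_one hG hs hd hz), mul_transpose_eq_sum_vecMulVec]
  rfl
end

section
/- Let K^σ be a positive definite kernel on a set 𝒵 with RKHS H, let Z = (z₁,…,z_n) be training inputs, S an n×k real matrix with linearly independent columns, and C = S(Sᵀ K^σ(Z,Z) S)⁻¹ Sᵀ. For a test point z define the approximate posterior mean functional μ̂[y](z) = Σ(z,Z) C y(Z) (zero prior mean) where Σ(z,Z) = K^σ(z,Z) when z ∉ Z. Then sup over y ∈ H with ‖y‖_H ≤ 1 of |y(z) − μ̂[y](z)| equals ‖K^σ(·,z) − K^σ(·,Z) C K^σ(Z,z)‖_H = √(K^σ(z,z) − K^σ(z,Z) C K^σ(Z,z)). That is, the worst-case prediction error over the RKHS unit ball equals the approximate posterior standard deviation. -/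
/-!
The error functional `y ↦ y(z) - μ̂[y](z)` is `⟪w, ·⟫` for `w = K^σ(·,z) - K^σ(·,Z) C K^σ(Z,z)`,
so by Cauchy–Schwarz (with equality at `w / ‖w‖`) its supremum over the unit ball is `‖w‖`.
Expanding `‖w‖²`, both the cross term and the square of `K^σ(·,Z) C K^σ(Z,z)` equal
`K^σ(z,Z) C K^σ(Z,z)`, because `C` is symmetric and `C K^σ(Z,Z) C = C`.
-/

open Matrix
open scoped InnerProductSpace

namespace Matrix

variable {R : Type*} [CommRing R] {m k : Type*} [Fintype m] [Fintype k] [DecidableEq k]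

noncomputable def approxPrecision (K : Matrix m m R) (S : Matrix m k R) : Matrix m m R :=
  S * (Sᵀ * K * S)⁻¹ * Sᵀ

theorem isSymm_approxPrecision {K : Matrix m m R} (hK : K.IsSymm) (S : Matrix m k R) :
    (approxPrecision K S).IsSymm := by
  simp only [IsSymm, approxPrecision, transpose_mul, transpose_transpose, transpose_nonsing_inv,
    hK.eq, Matrix.mul_assoc]

theorem approxPrecision_mul_mul_approxPrecision {K : Matrix m m R} {S : Matrix m k R}
    (hKS : IsUnit (Sᵀ * K * S)) :
    approxPrecision K S * K * approxPrecision K S = approxPrecision K S := by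
  have hdet : IsUnit (Sᵀ * K * S).det := (isUnit_iff_isUnit_det _).mp hKS
  calc approxPrecision K S * K * approxPrecision K S
      = S * ((Sᵀ * K * S)⁻¹ * (Sᵀ * K * S)) * (Sᵀ * K * S)⁻¹ * Sᵀ := by
        simp only [approxPrecision, Matrix.mul_assoc]
    _ = approxPrecision K S := by rw [nonsing_inv_mul _ hdet, Matrix.mul_one, approxPrecision]

end Matrix

section

variable {H : Type*} [NormedAddCommGroup H] [InnerProductSpace ℝ H]

theorem iSup_abs_inner_unitBall_eq_norm (w : H) :
    ⨆ y : {y : H // ‖y‖ ≤ 1}, |⟪w, (y : H)⟫_ℝ| = ‖w‖ := by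
  rw [← innerSL_apply_norm ℝ w, ← (innerSL ℝ w).sSup_unitClosedBall_eq_norm, sSup_image']
  exact (Equiv.subtypeEquivRight fun _ => mem_closedBall_zero_iff.symm).iSup_congr fun _ => rfl

variable {ι : Type*} [Fintype ι]

theorem norm_sub_sum_sum_smul_sq_of_mul_gram_mul {x : H} (v : ι → H) {C : Matrix ι ι ℝ}
    (hC : C.IsSymm) (hCGC : C * gram ℝ v * C = C) :
    ‖x - ∑ i, ∑ j, (⟪x, v i⟫_ℝ * C i j) • v j‖ ^ 2 =
      ⟪x, x⟫_ℝ - ∑ i, ∑ j, ⟪x, v i⟫_ℝ * C i j * ⟪v j, x⟫_ℝ := by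
  set a : ι → ℝ := fun i => ⟪x, v i⟫_ℝ
  have hs : ∑ i, ∑ j, (a i * C i j) • v j = ∑ j, (a ᵥ* C) j • v j := by
    rw [Finset.sum_comm]
    simp only [vecMul, dotProduct, Finset.sum_smul]
  have hq : ∑ i, ∑ j, a i * C i j * ⟪v j, x⟫_ℝ = a ⬝ᵥ C *ᵥ a := by
    simp only [real_inner_comm x, dotProduct, mulVec, Finset.mul_sum, mul_assoc]
    rfl
  have hxs : ⟪x, ∑ j, (a ᵥ* C) j • v j⟫_ℝ = a ⬝ᵥ C *ᵥ a := by
    rw [dotProduct_mulVec]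
    simp only [inner_sum, real_inner_smul_right, dotProduct]
    rfl
  have hss : ‖∑ j, (a ᵥ* C) j • v j‖ ^ 2 = a ⬝ᵥ C *ᵥ a := by
    have hb : C *ᵥ a = a ᵥ* C := by rw [← vecMul_transpose, hC.eq]
    rw [← real_inner_self_eq_norm_sq, ← star_dotProduct_gram_mulVec, star_trivial]
    nth_rw 2 [← hb]
    rw [← dotProduct_mulVec, mulVec_mulVec, mulVec_mulVec, hCGC]
  rw [hs, hq, norm_sub_sq_real, hxs, hss, real_inner_self_eq_norm_sq]
  ring

end

-- `ev z` is the representer `K^σ(·, z)`, so `y(z) = ⟪ev z, y⟫` and `K^σ(z, z') = ⟪ev z, ev z'⟫`.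
theorem worst_case_error_iter_gp_general {n k : ℕ} {Z : Type*} {H : Type*}
    [NormedAddCommGroup H] [InnerProductSpace ℝ H]
    (ev : Z → H)
    (Zs : Fin n → Z)
    (z : Z)
    (hPD : (Matrix.of fun i j : Fin n =>
      (inner ℝ (ev (Zs i)) (ev (Zs j)) : ℝ)).PosDef)
    (S : Matrix (Fin n) (Fin k) ℝ)
    (hS : LinearIndependent ℝ (fun j : Fin k => Sᵀ j))
    (C : Matrix (Fin n) (Fin n) ℝ)
    (hC : C = S * (Sᵀ * (Matrix.of fun i j : Fin n =>
      (inner ℝ (ev (Zs i)) (ev (Zs j)) : ℝ)) * S)⁻¹ * Sᵀ) :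
    (⨆ y : {y : H // ‖y‖ ≤ 1},
        |(inner ℝ (ev z) (y : H) : ℝ) -
          ∑ i, ∑ j, (inner ℝ (ev z) (ev (Zs i)) : ℝ) * C i j *
            (inner ℝ (ev (Zs j)) (y : H) : ℝ)|)
      = ‖ev z - ∑ i, ∑ j,
          ((inner ℝ (ev z) (ev (Zs i)) : ℝ) * C i j) • ev (Zs j)‖ ∧
    ‖ev z - ∑ i, ∑ j, ((inner ℝ (ev z) (ev (Zs i)) : ℝ) * C i j) • ev (Zs j)‖
      = Real.sqrt ((inner ℝ (ev z) (ev z) : ℝ) -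
          ∑ i, ∑ j, (inner ℝ (ev z) (ev (Zs i)) : ℝ) * C i j *
            (inner ℝ (ev (Zs j)) (ev z) : ℝ)) := by
  change C = approxPrecision (gram ℝ (ev ∘ Zs)) S at hC
  have hKS : IsUnit (Sᵀ * gram ℝ (ev ∘ Zs) * S) :=
    (hPD.conjTranspose_mul_mul_same (mulVec_injective_iff.mpr hS)).isUnit
  have hCsymm : C.IsSymm := hC ▸ isSymm_approxPrecision (isHermitian_gram ℝ _) S
  have hCKC : C * gram ℝ (ev ∘ Zs) * C = C := hC ▸ approxPrecision_mul_mul_approxPrecision hKS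
  refine ⟨?_, ?_⟩
  · rw [← iSup_abs_inner_unitBall_eq_norm]
    congr! with y
    simp only [inner_sub_left, sum_inner, real_inner_smul_left, mul_assoc]
  · rw [← Real.sqrt_sq (norm_nonneg _)]
    exact congrArg Real.sqrt (norm_sub_sum_sum_smul_sq_of_mul_gram_mul (ev ∘ Zs) hCsymm hCKC)

/-- Worst-case error of iteratively approximated GP regression: with `ev z ∈ H` the
representer of evaluation at `z` (so `y(z) = ⟪ev z, y⟫` and
`K^σ(z,z') = ⟪ev z, ev z'⟫`), training inputs `Zs`, actions `S` with linearly
independent columns, `C = S (Sᵀ K^σ(Z,Z) S)⁻¹ Sᵀ`, and approximate posterior mean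
`μ̂[y](z) = K^σ(z,Z) C y(Z)`, the worst-case error over the RKHS unit ball equals
`‖K^σ(·,z) - K^σ(·,Z) C K^σ(Z,z)‖_H = √(K^σ(z,z) - K^σ(z,Z) C K^σ(Z,z))`. -/
theorem worst_case_error_iter_gp {n k : ℕ} {Z : Type*} {H : Type*}
    [NormedAddCommGroup H] [InnerProductSpace ℝ H]
    (ev : Z → H)
    (Zs : Fin n → Z) (hZs : Function.Injective Zs)
    (z : Z) (hz : ∀ i, z ≠ Zs i)
    (hPD : (Matrix.of fun i j : Fin n =>
      (inner ℝ (ev (Zs i)) (ev (Zs j)) : ℝ)).PosDef)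
    (S : Matrix (Fin n) (Fin k) ℝ)
    (hS : LinearIndependent ℝ (fun j : Fin k => Sᵀ j))
    (C : Matrix (Fin n) (Fin n) ℝ)
    (hC : C = S * (Sᵀ * (Matrix.of fun i j : Fin n =>
      (inner ℝ (ev (Zs i)) (ev (Zs j)) : ℝ)) * S)⁻¹ * Sᵀ) :
    (⨆ y : {y : H // ‖y‖ ≤ 1},
        |(inner ℝ (ev z) (y : H) : ℝ) -
          ∑ i, ∑ j, (inner ℝ (ev z) (ev (Zs i)) : ℝ) * C i j *
            (inner ℝ (ev (Zs j)) (y : H) : ℝ)|)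
      = ‖ev z - ∑ i, ∑ j,
          ((inner ℝ (ev z) (ev (Zs i)) : ℝ) * C i j) • ev (Zs j)‖ ∧
    ‖ev z - ∑ i, ∑ j, ((inner ℝ (ev z) (ev (Zs i)) : ℝ) * C i j) • ev (Zs j)‖
      = Real.sqrt ((inner ℝ (ev z) (ev z) : ℝ) -
          ∑ i, ∑ j, (inner ℝ (ev z) (ev (Zs i)) : ℝ) * C i j *
            (inner ℝ (ev (Zs j)) (ev z) : ℝ)) :=
  worst_case_error_iter_gp_general ev Zs z hPD S hS C hC
end

section
/- Let G and Ĝ be symmetric positive definite N×N matrices with Ĝ = H P⁻ Hᵀ + Λ, and let S ∈ R^{N×k} have full column rank. Then P⁻ Hᵀ S (Sᵀ Ĝ S)⁻¹ Sᵀ H P⁻ ⪯ P⁻ Hᵀ Ĝ⁻¹ H P⁻ in the Loewner order. That is, the covariance reduction achieved by conditioning on the projected data Sᵀy is dominated by the reduction from conditioning on the full data y; equivalently, the computation-aware posterior covariance dominates the exact Kalman posterior covariance. -/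
/-!
With `Q = S (Sᴴ G S)⁻¹ Sᴴ`, the matrix `Q G` is the `G`-orthogonal projection onto the column
space of `S`, so `Q G Q = Q` and `G⁻¹ - Q = (1 - G Q)ᴴ G⁻¹ (1 - G Q)` is positive semidefinite.
Conjugating by `P⁻ Hᵀ` turns this into the comparison of the two covariance downdates, since
`Ĝ = H P⁻ Hᵀ + Λ` is positive definite.
-/

open Matrix

namespace Matrix.PosDef

variable {K m n : Type*} [Field K] [PartialOrder K] [StarRing K]
  [Fintype m] [Fintype n] [DecidableEq m] [DecidableEq n]

theorem posSemidef_inv_sub_compression {G : Matrix n n K} (hG : G.PosDef) (S : Matrix n m K) :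
    (G⁻¹ - S * (Sᴴ * G * S)⁻¹ * Sᴴ).PosSemidef := by
  set A := Sᴴ * G * S
  by_cases hA : IsUnit A.det
  swap
  · -- `A⁻¹ = 0` by the junk-value convention
    simpa [nonsing_inv_apply_not_isUnit _ hA] using hG.inv.posSemidef
  have hGdet : IsUnit G.det := (isUnit_iff_isUnit_det G).1 hG.isUnit
  set Q := S * A⁻¹ * Sᴴ
  have hQ : Qᴴ = Q := by
    have hAh : Aᴴ = A := (isHermitian_conjTranspose_mul_mul S hG.isHermitian).eq
    simp only [Q, conjTranspose_mul, conjTranspose_conjTranspose, conjTranspose_nonsing_inv, hAh,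
      Matrix.mul_assoc]
  have hQGQ : Q * G * Q = Q := by
    calc Q * G * Q = S * (A⁻¹ * A) * A⁻¹ * Sᴴ := by simp only [Q, A, Matrix.mul_assoc]
      _ = Q := by rw [nonsing_inv_mul A hA, Matrix.mul_one]
  have hleft : (1 - Q * G) * G⁻¹ = G⁻¹ - Q := by
    rw [Matrix.sub_mul, Matrix.one_mul, Matrix.mul_assoc, mul_nonsing_inv G hGdet, Matrix.mul_one]
  have hdecomp : G⁻¹ - Q = (1 - G * Q)ᴴ * G⁻¹ * (1 - G * Q) := by
    rw [conjTranspose_sub, conjTranspose_one, conjTranspose_mul, hQ, hG.isHermitian.eq, hleft,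
      Matrix.mul_sub, Matrix.mul_one, Matrix.sub_mul, ← Matrix.mul_assoc,
      nonsing_inv_mul G hGdet, Matrix.one_mul, ← Matrix.mul_assoc Q G Q, hQGQ, sub_self, sub_zero]
  rw [hdecomp]
  exact hG.inv.posSemidef.conjTranspose_mul_mul_same _

end Matrix.PosDef

theorem projected_downdate_dominated_general {D N k : ℕ}
    (Pm : Matrix (Fin D) (Fin D) ℝ) (H : Matrix (Fin N) (Fin D) ℝ)
    (Λ Ghat : Matrix (Fin N) (Fin N) ℝ) (S : Matrix (Fin N) (Fin k) ℝ)
    (hPm : Pm.PosSemidef) (hΛ : Λ.PosDef)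
    (hGhat : Ghat = H * Pm * Hᵀ + Λ) :
    (Pm * Hᵀ * Ghat⁻¹ * H * Pm -
      Pm * Hᵀ * S * (Sᵀ * Ghat * S)⁻¹ * Sᵀ * H * Pm).PosSemidef := by
  have hPmT : Pmᵀ = Pm := by simpa using hPm.isHermitian.eq
  have hG : Ghat.PosDef := by
    rw [hGhat, ← conjTranspose_eq_transpose_of_trivial]
    exact PosDef.posSemidef_add (hPm.mul_mul_conjTranspose_same H) hΛ
  have key := (hG.posSemidef_inv_sub_compression S).mul_mul_conjTranspose_same (Pm * Hᵀ)
  simp only [conjTranspose_eq_transpose_of_trivial, transpose_mul, transpose_transpose, hPmT]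
    at key
  rw [Matrix.mul_sub, Matrix.sub_mul] at key
  simpa only [Matrix.mul_assoc] using key

/-- The covariance reduction from conditioning on the projected data is dominated
by that of conditioning on the full data:
`P⁻ Hᵀ S (Sᵀ Ĝ S)⁻¹ Sᵀ H P⁻ ⪯ P⁻ Hᵀ Ĝ⁻¹ H P⁻` in the Loewner order. -/
theorem projected_downdate_dominated {D N k : ℕ}
    (Pm : Matrix (Fin D) (Fin D) ℝ) (H : Matrix (Fin N) (Fin D) ℝ)
    (Λ Ghat : Matrix (Fin N) (Fin N) ℝ) (S : Matrix (Fin N) (Fin k) ℝ)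
    (hPm : Pm.PosSemidef) (hΛ : Λ.PosDef)
    (hS : LinearIndependent ℝ (fun j : Fin k => Sᵀ j))
    (hGhat : Ghat = H * Pm * Hᵀ + Λ) :
    (Pm * Hᵀ * Ghat⁻¹ * H * Pm -
      Pm * Hᵀ * S * (Sᵀ * Ghat * S)⁻¹ * Sᵀ * H * Pm).PosSemidef :=
  projected_downdate_dominated_general Pm H Λ Ghat S hPm hΛ hGhat
end
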